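/- For real numbers a, b, c, d, e ≥ 0, let Δ₅(a,b,c,d,e) ⊂ ℝ⁵ be defined by: u₁,…,u₅ ≥ 0; u₁ ≤ a+b+d; u₅ ≤ e; u₃+u₅ ≤ c+e; u₄+u₅ ≤ d+e; u₁+u₄+u₅ ≤ a+b+d+e; u₂+u₃+u₅ ≤ b+c+d+e; u₂+u₄+u₅ ≤ b+c+d+e; u₁+u₂+u₃+u₅ ≤ a+b+c+d+e; u₁+u₂+u₄+u₅ ≤ a+b+c+d+e; u₂+u₃+u₄+2u₅ ≤ b+c+d+2e; u₁+u₂+u₃+u₄+2u₅ ≤ a+b+c+d+2e. Then: (i) the top slice {u ∈ Δ₅(a,b,c,d,e) : u₅ = e} equals Δ₄(a,b,c,d)×{e}; and (ii) the bottom slice {u ∈ Δ₅(a,b,c,d,e) : u₅ = 0} equals the codimension-two truncation of Δ₄(a,b,c+e,d+e) obtained by intersecting it with the five half-spaces {u₁ ≤ a+b+d}, {u₂+u₃ ≤ b+c+d+e}, {u₂+u₄ ≤ b+c+d+e}, {u₁+u₂+u₃ ≤ a+b+c+d+e}, {u₁+u₂+u₄ ≤ a+b+c+d+e} (slices are regarded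 in ℝ⁴ via (u₁,u₂,u₃,u₄)). -/

import Mathlib

/-- The polytope `Δ₄(a,b,c,d) ⊂ ℝ⁴`. -/
def Delta4 (a b c d : ℝ) : Set (Fin 4 → ℝ) :=
  {v | 0 ≤ v 0 ∧ 0 ≤ v 1 ∧ 0 ≤ v 2 ∧ 0 ≤ v 3 ∧ v 2 ≤ c ∧ v 3 ≤ d ∧
    v 0 + v 3 ≤ a + b + d ∧ v 1 + v 2 + v 3 ≤ b + c + d ∧
    v 0 + v 1 + v 2 + v 3 ≤ a + b + c + d}

/-- The polytope `Δ₅(a,b,c,d,e) ⊂ ℝ⁵`. -/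
def Delta5 (a b c d e : ℝ) : Set (Fin 5 → ℝ) :=
  {u | (∀ i, 0 ≤ u i) ∧ u 0 ≤ a + b + d ∧ u 4 ≤ e ∧ u 2 + u 4 ≤ c + e ∧
    u 3 + u 4 ≤ d + e ∧ u 0 + u 3 + u 4 ≤ a + b + d + e ∧
    u 1 + u 2 + u 4 ≤ b + c + d + e ∧ u 1 + u 3 + u 4 ≤ b + c + d + e ∧
    u 0 + u 1 + u 2 + u 4 ≤ a + b + c + d + e ∧
    u 0 + u 1 + u 3 + u 4 ≤ a + b + c + d + e ∧
    u 1 + u 2 + u 3 + 2 * u 4 ≤ b + c + d + 2 * e ∧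
    u 0 + u 1 + u 2 + u 3 + 2 * u 4 ≤ a + b + c + d + 2 * e}

/-- The projection `ℝ⁵ → ℝ⁴` forgetting the last coordinate `u₅`. -/
def proj54 (u : Fin 5 → ℝ) (k : Fin 4) : ℝ := u k.castSucc

/-! Both slices are cut out by substituting the value of `u₅` into the inequalities of `Δ₅`.
At `u₅ = e` the inequalities `u₁ ≤ a+b+d`, `u₂+u₃+u₅ ≤ b+c+d+e`, `u₁+u₂+u₃+u₅ ≤ a+b+c+d+e`
and their analogues with `u₄` in place of `u₃` are implied by those of `Δ₄(a,b,c,d)`, since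
`u₃, u₄ ≥ 0`. At `u₅ = 0` the inequalities become literally those of the truncation. -/

theorem mem_image_init_setOf_last_eq {n : ℕ} {α : Type*} (S : Set (Fin (n + 1) → α)) (t : α)
    (v : Fin n → α) :
    v ∈ Fin.init '' {u | u ∈ S ∧ u (Fin.last n) = t} ↔ Fin.snoc v t ∈ S := by
  constructor
  · rintro ⟨u, ⟨hu, rfl⟩, rfl⟩
    rwa [Fin.snoc_init_self]
  · exact fun hv => ⟨Fin.snoc v t, ⟨hv, Fin.snoc_last ..⟩, Fin.init_snoc ..⟩

theorem proj54_eq_init : proj54 = Fin.init := rfl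

section Slices

variable {a b c d e : ℝ}

theorem snoc_mem_Delta5_iff (v : Fin 4 → ℝ) (t : ℝ) :
    Fin.snoc v t ∈ Delta5 a b c d e ↔
      ((∀ i, 0 ≤ v i) ∧ 0 ≤ t) ∧ v 0 ≤ a + b + d ∧ t ≤ e ∧
      v 2 + t ≤ c + e ∧ v 3 + t ≤ d + e ∧ v 0 + v 3 + t ≤ a + b + d + e ∧
      v 1 + v 2 + t ≤ b + c + d + e ∧ v 1 + v 3 + t ≤ b + c + d + e ∧
      v 0 + v 1 + v 2 + t ≤ a + b + c + d + e ∧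
      v 0 + v 1 + v 3 + t ≤ a + b + c + d + e ∧
      v 1 + v 2 + v 3 + 2 * t ≤ b + c + d + 2 * e ∧
      v 0 + v 1 + v 2 + v 3 + 2 * t ≤ a + b + c + d + 2 * e := by
  simp only [Delta5, Set.mem_ofPred_eq, Fin.forall_fin_succ', Fin.snoc_castSucc, Fin.snoc_last]
  exact Iff.rfl

theorem snoc_mem_Delta5_top_iff (he : 0 ≤ e) (v : Fin 4 → ℝ) :
    Fin.snoc v e ∈ Delta5 a b c d e ↔ v ∈ Delta4 a b c d := by
  rw [snoc_mem_Delta5_iff]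
  constructor
  · rintro ⟨⟨hv, -⟩, -, -, h4, h5, h6, -, -, -, -, h7, h8⟩
    exact ⟨hv 0, hv 1, hv 2, hv 3, by linarith, by linarith, by linarith, by linarith, by linarith⟩
  · rintro ⟨h0, h1, h2, h3, h4, h5, h6, h7, h8⟩
    refine ⟨⟨fun i => ?_, he⟩, ?_⟩
    · fin_cases i <;> assumption
    refine ⟨?_, ?_, ?_, ?_, ?_, ?_, ?_, ?_, ?_, ?_, ?_⟩ <;> linarith

theorem snoc_mem_Delta5_bottom_iff (he : 0 ≤ e) (v : Fin 4 → ℝ) :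
    Fin.snoc v 0 ∈ Delta5 a b c d e ↔
      v ∈ Delta4 a b (c + e) (d + e) ∧
        v 0 ≤ a + b + d ∧ v 1 + v 2 ≤ b + c + d + e ∧ v 1 + v 3 ≤ b + c + d + e ∧
        v 0 + v 1 + v 2 ≤ a + b + c + d + e ∧ v 0 + v 1 + v 3 ≤ a + b + c + d + e := by
  rw [snoc_mem_Delta5_iff]
  constructor
  · rintro ⟨⟨hv, -⟩, t1, -, h4, h5, h6, t2, t3, t4, t5, h7, h8⟩
    refine ⟨⟨hv 0, hv 1, hv 2, hv 3, ?_, ?_, ?_, ?_, ?_⟩, ?_, ?_, ?_, ?_, ?_⟩ <;> linarith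
  · rintro ⟨⟨h0, h1, h2, h3, h4, h5, h6, h7, h8⟩, t1, t2, t3, t4, t5⟩
    refine ⟨⟨fun i => ?_, le_rfl⟩, ?_⟩
    · fin_cases i <;> assumption
    refine ⟨?_, ?_, ?_, ?_, ?_, ?_, ?_, ?_, ?_, ?_, ?_⟩ <;> linarith

end Slices

theorem Delta5_slices_general (a b c d e : ℝ) (he : 0 ≤ e) :
    proj54 '' {u | u ∈ Delta5 a b c d e ∧ u 4 = e} = Delta4 a b c d ∧
    proj54 '' {u | u ∈ Delta5 a b c d e ∧ u 4 = 0} =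
      Delta4 a b (c + e) (d + e) ∩
        {v | v 0 ≤ a + b + d ∧ v 1 + v 2 ≤ b + c + d + e ∧ v 1 + v 3 ≤ b + c + d + e ∧
          v 0 + v 1 + v 2 ≤ a + b + c + d + e ∧
          v 0 + v 1 + v 3 ≤ a + b + c + d + e} := by
  rw [proj54_eq_init]
  constructor <;> ext v
  · exact (mem_image_init_setOf_last_eq _ e v).trans (snoc_mem_Delta5_top_iff he v)
  · exact (mem_image_init_setOf_last_eq _ 0 v).trans (snoc_mem_Delta5_bottom_iff he v)

/-- The slices of `Δ₅`: the top slice `{u₅ = e}` is `Δ₄(a,b,c,d)` and the bottom slice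
`{u₅ = 0}` is the codimension-two truncation of `Δ₄(a,b,c+e,d+e)` by the five
half-spaces `u₁ ≤ a+b+d`, `u₂+u₃ ≤ b+c+d+e`, `u₂+u₄ ≤ b+c+d+e`,
`u₁+u₂+u₃ ≤ a+b+c+d+e`, `u₁+u₂+u₄ ≤ a+b+c+d+e` (slices regarded in `ℝ⁴` via
`(u₁,u₂,u₃,u₄)`). -/
theorem Delta5_slices (a b c d e : ℝ)
    (ha : 0 ≤ a) (hb : 0 ≤ b) (hc : 0 ≤ c) (hd : 0 ≤ d) (he : 0 ≤ e) :
    proj54 '' {u | u ∈ Delta5 a b c d e ∧ u 4 = e} = Delta4 a b c d ∧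
    proj54 '' {u | u ∈ Delta5 a b c d e ∧ u 4 = 0} =
      Delta4 a b (c + e) (d + e) ∩
        {v | v 0 ≤ a + b + d ∧ v 1 + v 2 ≤ b + c + d + e ∧ v 1 + v 3 ≤ b + c + d + e ∧
          v 0 + v 1 + v 2 ≤ a + b + c + d + e ∧
          v 0 + v 1 + v 3 ≤ a + b + c + d + e} :=
  Delta5_slices_general a b c d e he
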